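/- For Φ(u,r,t;v,ρ) := (u−v)² − (b/2)²(4r²ρ² − (r²+ρ²−t²)²), define the tangent vector fields T¹ := ∂_{(u,r,t)}Φ, T² with components T²_j := det[∂_{(v,ρ)}Φ, ∂_{(v,ρ)}∂_{x_j}Φ] for x = (u,r,t), and S := S¹ − S², where S¹_j and S²_j are the 3×3 bordered determinants S¹_j := det[[0, (∂_{(v,ρ)}Φ)ᵀ],[∂_{(v,ρ)}Φ, ∂²_{(v,ρ)(v,ρ)}∂_{x_j}Φ]] and S²_j := det[[0, (∂_{(v,ρ)}∂_{x_j}Φ)ᵀ],[∂_{(v,ρ)}Φ, ∂²_{(v,ρ)(v,ρ)}Φ]]. Then the cinematic curvature Cin(Φ) := det[S, T¹, T²] satisfies, at every point with Φ(u,r,t;v,ρ) = 0: Cin(Φ)(u,r,t;v,ρ) = 64·b⁸·r³·t³·ρ³·(r² − t²). -/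

import Mathlib

/-- The defining function Φ(u,r,t;v,ρ) = (u−v)² − (b/2)²(4r²ρ² − (r²+ρ²−t²)²). -/
noncomputable def Phi (b u r t v ρ : ℝ) : ℝ :=
  (u - v) ^ 2 - (b / 2) ^ 2 * (4 * r ^ 2 * ρ ^ 2 - (r ^ 2 + ρ ^ 2 - t ^ 2) ^ 2)

/-- ∂_u Φ -/
noncomputable def Pu (b u r t v ρ : ℝ) : ℝ := deriv (fun u' => Phi b u' r t v ρ) u
/-- ∂_r Φ -/
noncomputable def Pr (b u r t v ρ : ℝ) : ℝ := deriv (fun r' => Phi b u r' t v ρ) r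
/-- ∂_t Φ -/
noncomputable def Pt (b u r t v ρ : ℝ) : ℝ := deriv (fun t' => Phi b u r t' v ρ) t
/-- ∂_v Φ -/
noncomputable def Pv (b u r t v ρ : ℝ) : ℝ := deriv (fun v' => Phi b u r t v' ρ) v
/-- ∂_ρ Φ -/
noncomputable def Pp (b u r t v ρ : ℝ) : ℝ := deriv (fun ρ' => Phi b u r t v ρ') ρ
/-- ∂²_{uv} Φ -/
noncomputable def Puv (b u r t v ρ : ℝ) : ℝ := deriv (fun u' => Pv b u' r t v ρ) u
/-- ∂²_{uρ} Φ -/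
noncomputable def Pup (b u r t v ρ : ℝ) : ℝ := deriv (fun u' => Pp b u' r t v ρ) u
/-- ∂²_{rv} Φ -/
noncomputable def Prv (b u r t v ρ : ℝ) : ℝ := deriv (fun r' => Pv b u r' t v ρ) r
/-- ∂²_{rρ} Φ -/
noncomputable def Prp (b u r t v ρ : ℝ) : ℝ := deriv (fun r' => Pp b u r' t v ρ) r
/-- ∂²_{tv} Φ -/
noncomputable def Ptv (b u r t v ρ : ℝ) : ℝ := deriv (fun t' => Pv b u r t' v ρ) t
/-- ∂²_{tρ} Φ -/
noncomputable def Ptp (b u r t v ρ : ℝ) : ℝ := deriv (fun t' => Pp b u r t' v ρ) t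
/-- ∂²_{vv} Φ -/
noncomputable def Pvv (b u r t v ρ : ℝ) : ℝ := deriv (fun v' => Pv b u r t v' ρ) v
/-- ∂²_{vρ} Φ -/
noncomputable def Pvp (b u r t v ρ : ℝ) : ℝ := deriv (fun v' => Pp b u r t v' ρ) v
/-- ∂²_{ρv} Φ -/
noncomputable def Ppv (b u r t v ρ : ℝ) : ℝ := deriv (fun ρ' => Pv b u r t v ρ') ρ
/-- ∂²_{ρρ} Φ -/
noncomputable def Ppp (b u r t v ρ : ℝ) : ℝ := deriv (fun ρ' => Pp b u r t v ρ') ρ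

/-- ∂_v of the (u,r,t)-partials of Φ. -/
noncomputable def Pvu (b u r t v ρ : ℝ) : ℝ := deriv (fun v' => Pu b u r t v' ρ) v
noncomputable def Pvr (b u r t v ρ : ℝ) : ℝ := deriv (fun v' => Pr b u r t v' ρ) v
noncomputable def Pvt (b u r t v ρ : ℝ) : ℝ := deriv (fun v' => Pt b u r t v' ρ) v
/-- ∂_ρ of the (u,r,t)-partials of Φ. -/
noncomputable def Ppu (b u r t v ρ : ℝ) : ℝ := deriv (fun ρ' => Pu b u r t v ρ') ρ
noncomputable def Ppr (b u r t v ρ : ℝ) : ℝ := deriv (fun ρ' => Pr b u r t v ρ') ρ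
noncomputable def Ppt (b u r t v ρ : ℝ) : ℝ := deriv (fun ρ' => Pt b u r t v ρ') ρ

/-- second (v,ρ)-derivatives of ∂_uΦ -/
noncomputable def Puvv (b u r t v ρ : ℝ) : ℝ :=
  deriv (fun v1 => deriv (fun v2 => Pu b u r t v2 ρ) v1) v
noncomputable def Puvp (b u r t v ρ : ℝ) : ℝ :=
  deriv (fun v' => deriv (fun ρ' => Pu b u r t v' ρ') ρ) v
noncomputable def Pupv (b u r t v ρ : ℝ) : ℝ :=
  deriv (fun ρ' => deriv (fun v' => Pu b u r t v' ρ') v) ρ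
noncomputable def Pupp (b u r t v ρ : ℝ) : ℝ :=
  deriv (fun ρ1 => deriv (fun ρ2 => Pu b u r t v ρ2) ρ1) ρ
/-- second (v,ρ)-derivatives of ∂_rΦ -/
noncomputable def Prvv (b u r t v ρ : ℝ) : ℝ :=
  deriv (fun v1 => deriv (fun v2 => Pr b u r t v2 ρ) v1) v
noncomputable def Prvp (b u r t v ρ : ℝ) : ℝ :=
  deriv (fun v' => deriv (fun ρ' => Pr b u r t v' ρ') ρ) v
noncomputable def Prpv (b u r t v ρ : ℝ) : ℝ :=
  deriv (fun ρ' => deriv (fun v' => Pr b u r t v' ρ') v) ρ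
noncomputable def Prpp (b u r t v ρ : ℝ) : ℝ :=
  deriv (fun ρ1 => deriv (fun ρ2 => Pr b u r t v ρ2) ρ1) ρ
/-- second (v,ρ)-derivatives of ∂_tΦ -/
noncomputable def Ptvv (b u r t v ρ : ℝ) : ℝ :=
  deriv (fun v1 => deriv (fun v2 => Pt b u r t v2 ρ) v1) v
noncomputable def Ptvp (b u r t v ρ : ℝ) : ℝ :=
  deriv (fun v' => deriv (fun ρ' => Pt b u r t v' ρ') ρ) v
noncomputable def Ptpv (b u r t v ρ : ℝ) : ℝ :=
  deriv (fun ρ' => deriv (fun v' => Pt b u r t v' ρ') v) ρ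
noncomputable def Ptpp (b u r t v ρ : ℝ) : ℝ :=
  deriv (fun ρ1 => deriv (fun ρ2 => Pt b u r t v ρ2) ρ1) ρ

/-- T²_j = det[∂_{(v,ρ)}Φ, ∂_{(v,ρ)}∂_{x_j}Φ], for x_j = u, r, t. -/
noncomputable def T2u (b u r t v ρ : ℝ) : ℝ :=
  Matrix.det !![Pv b u r t v ρ, Pvu b u r t v ρ; Pp b u r t v ρ, Ppu b u r t v ρ]
noncomputable def T2r (b u r t v ρ : ℝ) : ℝ :=
  Matrix.det !![Pv b u r t v ρ, Pvr b u r t v ρ; Pp b u r t v ρ, Ppr b u r t v ρ]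
noncomputable def T2t (b u r t v ρ : ℝ) : ℝ :=
  Matrix.det !![Pv b u r t v ρ, Pvt b u r t v ρ; Pp b u r t v ρ, Ppt b u r t v ρ]

/-- S¹_j, the first bordered determinant. -/
noncomputable def S1u (b u r t v ρ : ℝ) : ℝ :=
  Matrix.det !![0, Pv b u r t v ρ, Pp b u r t v ρ;
                Pv b u r t v ρ, Puvv b u r t v ρ, Puvp b u r t v ρ;
                Pp b u r t v ρ, Pupv b u r t v ρ, Pupp b u r t v ρ]
noncomputable def S1r (b u r t v ρ : ℝ) : ℝ :=
  Matrix.det !![0, Pv b u r t v ρ, Pp b u r t v ρ;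
                Pv b u r t v ρ, Prvv b u r t v ρ, Prvp b u r t v ρ;
                Pp b u r t v ρ, Prpv b u r t v ρ, Prpp b u r t v ρ]
noncomputable def S1t (b u r t v ρ : ℝ) : ℝ :=
  Matrix.det !![0, Pv b u r t v ρ, Pp b u r t v ρ;
                Pv b u r t v ρ, Ptvv b u r t v ρ, Ptvp b u r t v ρ;
                Pp b u r t v ρ, Ptpv b u r t v ρ, Ptpp b u r t v ρ]

/-- S²_j, the second bordered determinant. -/
noncomputable def S2u (b u r t v ρ : ℝ) : ℝ :=
  Matrix.det !![0, Pvu b u r t v ρ, Ppu b u r t v ρ;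
                Pv b u r t v ρ, Pvv b u r t v ρ, Pvp b u r t v ρ;
                Pp b u r t v ρ, Ppv b u r t v ρ, Ppp b u r t v ρ]
noncomputable def S2r (b u r t v ρ : ℝ) : ℝ :=
  Matrix.det !![0, Pvr b u r t v ρ, Ppr b u r t v ρ;
                Pv b u r t v ρ, Pvv b u r t v ρ, Pvp b u r t v ρ;
                Pp b u r t v ρ, Ppv b u r t v ρ, Ppp b u r t v ρ]
noncomputable def S2t (b u r t v ρ : ℝ) : ℝ :=
  Matrix.det !![0, Pvt b u r t v ρ, Ppt b u r t v ρ;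
                Pv b u r t v ρ, Pvv b u r t v ρ, Pvp b u r t v ρ;
                Pp b u r t v ρ, Ppv b u r t v ρ, Ppp b u r t v ρ]

/-! For all arguments the determinant factors as
`Cin = 16 b⁶ r t ρ³ (r² − t²) (4(u−v)² + b²(r²+t²−ρ²)²)`: the partial derivatives of Φ are explicit
polynomials, and the `r`- and `t`-components of `S` and of `T²` are `r` resp. `t` times the same
factors, so after taking `r` and `t` out of those rows and subtracting one from the other only the
`T¹`-entry `2b²(t² − r²)` survives. On the zero set of Φ a difference of squares turns the last
factor into `4b²r²t²`. -/

noncomputable def Cin (b u r t v ρ : ℝ) : ℝ :=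
  (Matrix.transpose
    !![S1u b u r t v ρ - S2u b u r t v ρ,
       S1r b u r t v ρ - S2r b u r t v ρ,
       S1t b u r t v ρ - S2t b u r t v ρ;
       Pu b u r t v ρ, Pr b u r t v ρ, Pt b u r t v ρ;
       T2u b u r t v ρ, T2r b u r t v ρ, T2t b u r t v ρ]).det

theorem Matrix.det_fin_three_of {R : Type*} [CommRing R] (a b c d e f g h i : R) :
    Matrix.det !![a, b, c; d, e, f; g, h, i]
      = a * e * i - a * f * h - b * d * i + b * f * g + c * d * h - c * e * g :=
  Matrix.det_fin_three _

section PartialDerivatives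

variable (b u r t v ρ : ℝ)

@[simp] lemma Pu_eq : Pu b u r t v ρ = 2 * (u - v) := by
  simp (disch := fun_prop) [Pu, Phi]

@[simp] lemma Pr_eq : Pr b u r t v ρ = -b ^ 2 * r * (t ^ 2 - r ^ 2 + ρ ^ 2) := by
  simp (disch := fun_prop) only [Pr, Phi, deriv_fun_sub, deriv_fun_add, deriv_fun_mul,
    deriv_fun_pow, deriv_const', deriv_id'', deriv_div_const]
  ring

@[simp] lemma Pt_eq : Pt b u r t v ρ = b ^ 2 * t * (t ^ 2 - r ^ 2 - ρ ^ 2) := by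
  simp (disch := fun_prop) only [Pt, Phi, deriv_fun_sub, deriv_fun_add, deriv_fun_mul,
    deriv_fun_pow, deriv_const', deriv_id'', deriv_div_const]
  ring

@[simp] lemma Pv_eq : Pv b u r t v ρ = -2 * (u - v) := by
  simp (disch := fun_prop) [Pv, Phi]

@[simp] lemma Pp_eq : Pp b u r t v ρ = -b ^ 2 * ρ * (t ^ 2 + r ^ 2 - ρ ^ 2) := by
  simp (disch := fun_prop) only [Pp, Phi, deriv_fun_sub, deriv_fun_add, deriv_fun_mul,
    deriv_fun_pow, deriv_const', deriv_id'', deriv_div_const]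
  ring

@[simp] lemma Pvv_eq : Pvv b u r t v ρ = 2 := by simp (disch := fun_prop) [Pvv]
@[simp] lemma Pvp_eq : Pvp b u r t v ρ = 0 := by simp (disch := fun_prop) [Pvp]
@[simp] lemma Ppv_eq : Ppv b u r t v ρ = 0 := by simp (disch := fun_prop) [Ppv]

@[simp] lemma Ppp_eq : Ppp b u r t v ρ = -b ^ 2 * (t ^ 2 + r ^ 2 - 3 * ρ ^ 2) := by
  simp (disch := fun_prop) only [Ppp, Pp_eq, deriv_fun_sub, deriv_fun_add, deriv_fun_mul,
    deriv_fun_pow, deriv_const', deriv_id'', deriv_const_mul_id']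
  ring

@[simp] lemma Pvu_eq : Pvu b u r t v ρ = -2 := by simp (disch := fun_prop) [Pvu]
@[simp] lemma Pvr_eq : Pvr b u r t v ρ = 0 := by simp (disch := fun_prop) [Pvr]
@[simp] lemma Pvt_eq : Pvt b u r t v ρ = 0 := by simp (disch := fun_prop) [Pvt]
@[simp] lemma Ppu_eq : Ppu b u r t v ρ = 0 := by simp (disch := fun_prop) [Ppu]

@[simp] lemma Ppr_eq : Ppr b u r t v ρ = -2 * b ^ 2 * r * ρ := by
  simp (disch := fun_prop) only [Ppr, Pr_eq, deriv_fun_sub, deriv_fun_add, deriv_fun_mul,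
    deriv_fun_pow, deriv_const', deriv_id'']
  ring

@[simp] lemma Ppt_eq : Ppt b u r t v ρ = -2 * b ^ 2 * t * ρ := by
  simp (disch := fun_prop) only [Ppt, Pt_eq, deriv_fun_sub, deriv_fun_mul, deriv_fun_pow,
    deriv_const', deriv_id'']
  ring

@[simp] lemma Puvv_eq : Puvv b u r t v ρ = 0 := by simp (disch := fun_prop) [Puvv]
@[simp] lemma Puvp_eq : Puvp b u r t v ρ = 0 := by simp (disch := fun_prop) [Puvp]
@[simp] lemma Pupv_eq : Pupv b u r t v ρ = 0 := by simp (disch := fun_prop) [Pupv]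
@[simp] lemma Pupp_eq : Pupp b u r t v ρ = 0 := by simp (disch := fun_prop) [Pupp]
@[simp] lemma Prvv_eq : Prvv b u r t v ρ = 0 := by simp (disch := fun_prop) [Prvv]
@[simp] lemma Prvp_eq : Prvp b u r t v ρ = 0 := by simp (disch := fun_prop) [Prvp]
@[simp] lemma Prpv_eq : Prpv b u r t v ρ = 0 := by simp (disch := fun_prop) [Prpv]
@[simp] lemma Ptvv_eq : Ptvv b u r t v ρ = 0 := by simp (disch := fun_prop) [Ptvv]
@[simp] lemma Ptvp_eq : Ptvp b u r t v ρ = 0 := by simp (disch := fun_prop) [Ptvp]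
@[simp] lemma Ptpv_eq : Ptpv b u r t v ρ = 0 := by simp (disch := fun_prop) [Ptpv]

@[simp] lemma Prpp_eq : Prpp b u r t v ρ = -2 * b ^ 2 * r := by
  simp (disch := fun_prop) only [Prpp, Pr_eq, deriv_fun_sub, deriv_fun_add, deriv_fun_mul,
    deriv_fun_pow, deriv_const', deriv_id'']
  ring

@[simp] lemma Ptpp_eq : Ptpp b u r t v ρ = -2 * b ^ 2 * t := by
  simp (disch := fun_prop) only [Ptpp, Pt_eq, deriv_fun_sub, deriv_fun_add, deriv_fun_mul,
    deriv_fun_pow, deriv_const', deriv_id'']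
  ring

end PartialDerivatives

section Columns

variable (b u r t v ρ : ℝ)

lemma T2u_eq : T2u b u r t v ρ = -2 * b ^ 2 * ρ * (t ^ 2 + r ^ 2 - ρ ^ 2) := by
  simp only [T2u, Matrix.det_fin_two_of, Pv_eq, Pp_eq, Pvu_eq, Ppu_eq]
  ring

lemma T2r_eq : T2r b u r t v ρ = r * (4 * b ^ 2 * (u - v) * ρ) := by
  simp only [T2r, Matrix.det_fin_two_of, Pv_eq, Pp_eq, Pvr_eq, Ppr_eq]
  ring

lemma T2t_eq : T2t b u r t v ρ = t * (4 * b ^ 2 * (u - v) * ρ) := by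
  simp only [T2t, Matrix.det_fin_two_of, Pv_eq, Pp_eq, Pvt_eq, Ppt_eq]
  ring

lemma S1u_sub_S2u : S1u b u r t v ρ - S2u b u r t v ρ
    = -4 * b ^ 2 * (u - v) * (t ^ 2 + r ^ 2 - 3 * ρ ^ 2) := by
  simp only [S1u, S2u, Matrix.det_fin_three_of, Pv_eq, Pp_eq, Puvv_eq, Puvp_eq, Pupv_eq, Pupp_eq,
    Pvu_eq, Ppu_eq, Pvv_eq, Pvp_eq, Ppv_eq, Ppp_eq]
  ring

lemma S1r_sub_S2r : S1r b u r t v ρ - S2r b u r t v ρ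
    = r * (8 * b ^ 2 * (u - v) ^ 2 + 4 * b ^ 4 * ρ ^ 2 * (t ^ 2 + r ^ 2 - ρ ^ 2)) := by
  simp only [S1r, S2r, Matrix.det_fin_three_of, Pv_eq, Pp_eq, Prvv_eq, Prvp_eq, Prpv_eq, Prpp_eq,
    Pvr_eq, Ppr_eq, Pvv_eq, Pvp_eq, Ppv_eq, Ppp_eq]
  ring

lemma S1t_sub_S2t : S1t b u r t v ρ - S2t b u r t v ρ
    = t * (8 * b ^ 2 * (u - v) ^ 2 + 4 * b ^ 4 * ρ ^ 2 * (t ^ 2 + r ^ 2 - ρ ^ 2)) := by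
  simp only [S1t, S2t, Matrix.det_fin_three_of, Pv_eq, Pp_eq, Ptvv_eq, Ptvp_eq, Ptpv_eq, Ptpp_eq,
    Pvt_eq, Ppt_eq, Pvv_eq, Pvp_eq, Ppv_eq, Ppp_eq]
  ring

lemma Cin_eq : Cin b u r t v ρ = 16 * b ^ 6 * r * t * ρ ^ 3 * (r ^ 2 - t ^ 2) *
    (4 * (u - v) ^ 2 + b ^ 2 * (t ^ 2 + r ^ 2 - ρ ^ 2) ^ 2) := by
  rw [Cin, Matrix.det_transpose, Matrix.det_fin_three_of, S1u_sub_S2u, S1r_sub_S2r, S1t_sub_S2t,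
    Pu_eq, Pr_eq, Pt_eq, T2u_eq, T2r_eq, T2t_eq]
  ring

end Columns

lemma four_mul_sq_add_eq_of_Phi_eq_zero {b u r t v ρ : ℝ} (hΦ : Phi b u r t v ρ = 0) :
    4 * (u - v) ^ 2 + b ^ 2 * (t ^ 2 + r ^ 2 - ρ ^ 2) ^ 2 = 4 * b ^ 2 * r ^ 2 * t ^ 2 := by
  unfold Phi at hΦ
  linear_combination 4 * hΦ

/-- On the zero set of Φ, the cinematic curvature Cin(Φ) = det[S, T¹, T²]
(columns S = S¹ − S², T¹ = ∂_{(u,r,t)}Φ, T²) equals 64b⁸r³t³ρ³(r²−t²). -/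
theorem statement16 (b u r t v ρ : ℝ) (hΦ : Phi b u r t v ρ = 0) :
    (Matrix.transpose
      !![S1u b u r t v ρ - S2u b u r t v ρ,
         S1r b u r t v ρ - S2r b u r t v ρ,
         S1t b u r t v ρ - S2t b u r t v ρ;
         Pu b u r t v ρ, Pr b u r t v ρ, Pt b u r t v ρ;
         T2u b u r t v ρ, T2r b u r t v ρ, T2t b u r t v ρ]).det
      = 64 * b ^ 8 * r ^ 3 * t ^ 3 * ρ ^ 3 * (r ^ 2 - t ^ 2) := by
  change Cin b u r t v ρ = _
  rw [Cin_eq, four_mul_sq_add_eq_of_Phi_eq_zero hΦ]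
  ring
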